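/- arXiv:1912.04456 — 2 statements merged into one kernel-verified Lean document; each statement's English description precedes it below -/
import Mathlib

section
/- (Lemma 1, part 3) Let γ > 0 and δ > 0 satisfy 0.8 δ ≥ γ. Let B be an n×n real symmetric positive definite matrix, s ∈ ℝⁿ a nonzero vector and y ∈ ℝⁿ. With the damped parameter θ̄ and the modified gradient difference ỹ = θ̄ y + (1 − θ̄)(B + δI)s − γ s, the damped regularized BFGS update B⁺ = B + (ỹ ỹᵀ)/(sᵀỹ) − (B s sᵀ B)/(sᵀ B s) + γ I is positive definite with every eigenvalue exceeding γ; that is, B⁺ − γ I is symmetric positive definite. -/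
open Matrix

private lemma vecMulVec_mulVec' {n : ℕ} (u v x : Fin n → ℝ) :
    vecMulVec u v *ᵥ x = (v ⬝ᵥ x) • u := by
  funext i
  simp [mulVec, vecMulVec_apply, dotProduct, Finset.mul_sum, mul_assoc, mul_comm, mul_left_comm]

private lemma herm_smul {n : ℕ} (r : ℝ) {M : Matrix (Fin n) (Fin n) ℝ} (h : M.IsHermitian) :
    (r • M).IsHermitian := by
  show (r • M)ᴴ = r • M
  rw [conjTranspose_smul, star_trivial, h]

private lemma isHermitian_vecMulVec' {n : ℕ} (u : Fin n → ℝ) :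
    (vecMulVec u u).IsHermitian := by
  ext i j
  simp [vecMulVec_apply, conjTranspose_apply, mul_comm]

private lemma vecMul_eq_mulVec' {n : ℕ} {B : Matrix (Fin n) (Fin n) ℝ} (hB : B.IsHermitian)
    (s : Fin n → ℝ) : s ᵥ* B = B *ᵥ s := by
  have hBt : Bᵀ = B := by
    ext i j
    simpa using congrFun (congrFun hB i) j
  rw [← hBt, mulVec_transpose, hBt]

private lemma dot_mulVec_comm {n : ℕ} {B : Matrix (Fin n) (Fin n) ℝ} (hB : B.IsHermitian)
    (x s : Fin n → ℝ) : x ⬝ᵥ (B *ᵥ s) = s ⬝ᵥ (B *ᵥ x) := by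
  rw [dotProduct_mulVec, vecMul_eq_mulVec' hB, dotProduct_comm]

/-- The core BFGS update positive-definiteness lemma. -/
private lemma bfgs_aux {n : ℕ} {B : Matrix (Fin n) (Fin n) ℝ} (hB : B.PosDef)
    {s u : Fin n → ℝ} (hs : s ≠ 0) (hc : 0 < s ⬝ᵥ u) :
    (B + (s ⬝ᵥ u)⁻¹ • vecMulVec u u
      - (s ⬝ᵥ (B *ᵥ s))⁻¹ • vecMulVec (B *ᵥ s) (s ᵥ* B)).PosDef := by
  have hH := hB.1
  rw [vecMul_eq_mulVec' hH]
  have ha : 0 < s ⬝ᵥ (B *ᵥ s) := by simpa using hB.dotProduct_mulVec_pos hs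
  set a := s ⬝ᵥ (B *ᵥ s) with ha_def
  set c := s ⬝ᵥ u with hc_def
  refine posDef_iff_dotProduct_mulVec.mpr ⟨?_, ?_⟩
  · exact ((hH.add (herm_smul _ (isHermitian_vecMulVec' u))).sub
      (herm_smul _ (isHermitian_vecMulVec' (B *ᵥ s))))
  · intro x hx
    have hstar : star x = x := by simp
    rw [hstar]
    set b := x ⬝ᵥ (B *ᵥ s) with hb_def
    set d := x ⬝ᵥ u with hd_def
    have hq : x ⬝ᵥ ((B + c⁻¹ • vecMulVec u u - a⁻¹ • vecMulVec (B *ᵥ s) (B *ᵥ s)) *ᵥ x)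
        = x ⬝ᵥ (B *ᵥ x) + c⁻¹ * (d * d) - a⁻¹ * (b * b) := by
      rw [sub_mulVec, add_mulVec, smul_mulVec, smul_mulVec,
        vecMulVec_mulVec', vecMulVec_mulVec', dotProduct_sub, dotProduct_add,
        dotProduct_smul, dotProduct_smul, dotProduct_smul, dotProduct_smul]
      rw [dotProduct_comm u x, dotProduct_comm (B *ᵥ s) x, ← hd_def, ← hb_def]
      simp only [smul_eq_mul]
      try ring
    rw [hq]
    by_cases hxs : x = (b / a) • s
    · -- x is a multiple of s
      have hbne : b / a ≠ 0 := by
        intro h0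
        apply hx
        rw [hxs, h0, zero_smul]
      have hxBx : x ⬝ᵥ (B *ᵥ x) = (b / a) * (b / a) * a := by
        rw [hxs, mulVec_smul, dotProduct_smul, smul_dotProduct]
        simp [ha_def]; ring
      have hd : d = (b / a) * c := by
        rw [hd_def, hxs, smul_dotProduct]; simp [hc_def]
      rw [hxBx, hd]
      have hbeq : b = (b / a) * a := by field_simp
      have e1 : c⁻¹ * (b / a * c * (b / a * c)) = (b / a) * (b / a) * c := by
        field_simp
      have e2 : a⁻¹ * (b * b) = (b / a) * (b / a) * a := by
        rw [hbeq]; field_simp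
      rw [e1, e2]
      have := mul_pos (mul_self_pos.mpr hbne) hc
      linarith
    · -- x is not that multiple of s
      have hz : x - (b / a) • s ≠ 0 := sub_ne_zero.mpr hxs
      have hzq : 0 < (x - (b / a) • s) ⬝ᵥ (B *ᵥ (x - (b / a) • s)) := by
        simpa using hB.dotProduct_mulVec_pos hz
      have hexp : (x - (b / a) • s) ⬝ᵥ (B *ᵥ (x - (b / a) • s))
          = x ⬝ᵥ (B *ᵥ x) - (b / a) * b - (b / a) * b + (b / a) * ((b / a) * a) := by
        rw [mulVec_sub, mulVec_smul, dotProduct_sub, sub_dotProduct, sub_dotProduct,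
          dotProduct_smul, dotProduct_smul, smul_dotProduct, smul_dotProduct,
          dot_mulVec_comm hH s x]
        simp only [smul_eq_mul]
        rw [← hb_def, ← ha_def]
        ring
      have h1 : 0 < x ⬝ᵥ (B *ᵥ x) - a⁻¹ * (b * b) := by
        rw [hexp] at hzq
        have e1 : (b / a) * ((b / a) * a) = a⁻¹ * (b * b) := by
          field_simp
        have e2 : (b / a) * b = a⁻¹ * (b * b) := by
          field_simp
        linarith
      have h2 : 0 ≤ c⁻¹ * (d * d) :=
        mul_nonneg (inv_nonneg.mpr hc.le) (mul_self_nonneg d)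
      linarith

/-- **Lemma 1, part 3.** With the damped parameter `θ̄` and the modified
gradient difference `ỹ = θ̄ y + (1 − θ̄)(B + δI)s − γ s`, the damped regularized BFGS
update `B⁺ = B + (ỹ ỹᵀ)/(sᵀỹ) − (B s sᵀ B)/(sᵀ B s) + γ I` is positive definite with
every eigenvalue exceeding `γ`; that is, `B⁺ − γ I` is symmetric positive definite. -/
theorem damped_regularized_bfgs_posDef {n : ℕ} (γ δ : ℝ) (hγ : 0 < γ) (hδ : 0 < δ)
    (hδγ : γ ≤ 0.8 * δ) (B : Matrix (Fin n) (Fin n) ℝ) (hB : B.PosDef)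
    (s y : Fin n → ℝ) (hs : s ≠ 0) (θ : ℝ)
    (hθ : θ = if s ⬝ᵥ y ≤ 0.2 * (s ⬝ᵥ ((B + δ • (1 : Matrix (Fin n) (Fin n) ℝ)) *ᵥ s))
              + γ * (s ⬝ᵥ s)
        then (0.8 * (s ⬝ᵥ ((B + δ • (1 : Matrix (Fin n) (Fin n) ℝ)) *ᵥ s)) - γ * (s ⬝ᵥ s))
          / (s ⬝ᵥ ((B + δ • (1 : Matrix (Fin n) (Fin n) ℝ)) *ᵥ s) - s ⬝ᵥ y)
        else 1)
    (yt : Fin n → ℝ)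
    (hyt : yt = θ • y + (1 - θ) • ((B + δ • (1 : Matrix (Fin n) (Fin n) ℝ)) *ᵥ s) - γ • s)
    (Bplus : Matrix (Fin n) (Fin n) ℝ)
    (hBplus : Bplus = B + (s ⬝ᵥ yt)⁻¹ • vecMulVec yt yt
        - (s ⬝ᵥ (B *ᵥ s))⁻¹ • vecMulVec (B *ᵥ s) (s ᵥ* B)
        + γ • (1 : Matrix (Fin n) (Fin n) ℝ)) :
    Bplus.PosDef ∧ (Bplus - γ • (1 : Matrix (Fin n) (Fin n) ℝ)).PosDef := by
  have ha : 0 < s ⬝ᵥ (B *ᵥ s) := by simpa using hB.dotProduct_mulVec_pos hs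
  have hq : 0 < s ⬝ᵥ s := by
    have := dotProduct_self_star_pos_iff.mpr hs
    simpa using this
  -- the A = B + δI quadratic form
  have hp : s ⬝ᵥ ((B + δ • (1 : Matrix (Fin n) (Fin n) ℝ)) *ᵥ s)
      = s ⬝ᵥ (B *ᵥ s) + δ * (s ⬝ᵥ s) := by
    rw [add_mulVec, smul_mulVec, one_mulVec, dotProduct_add, dotProduct_smul]
    simp
  set p := s ⬝ᵥ ((B + δ • (1 : Matrix (Fin n) (Fin n) ℝ)) *ᵥ s) with hp_def
  -- key: s ⬝ᵥ yt > 0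
  have hsyt : 0 < s ⬝ᵥ yt := by
    have hdot : s ⬝ᵥ yt = θ * (s ⬝ᵥ y) + (1 - θ) * p - γ * (s ⬝ᵥ s) := by
      rw [hyt, dotProduct_sub, dotProduct_add, dotProduct_smul, dotProduct_smul,
        dotProduct_smul]
      simp [hp_def]
    have hγq : γ * (s ⬝ᵥ s) < 0.8 * p := by
      rw [hp]
      nlinarith
    by_cases hcase : s ⬝ᵥ y ≤ 0.2 * p + γ * (s ⬝ᵥ s)
    · have hden : 0 < p - s ⬝ᵥ y := by nlinarith
      rw [if_pos hcase] at hθ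
      have hθval : θ * (p - s ⬝ᵥ y) = 0.8 * p - γ * (s ⬝ᵥ s) := by
        rw [hθ, div_mul_cancel₀ _ (ne_of_gt hden)]
      have : s ⬝ᵥ yt = 0.2 * p := by
        rw [hdot]; nlinarith [hθval]
      rw [this]
      nlinarith
    · push_neg at hcase
      rw [if_neg (not_le.mpr hcase)] at hθ
      rw [hdot, hθ]
      nlinarith
  have key := bfgs_aux hB hs hsyt
  have hEq : Bplus - γ • (1 : Matrix (Fin n) (Fin n) ℝ)
      = B + (s ⬝ᵥ yt)⁻¹ • vecMulVec yt yt
        - (s ⬝ᵥ (B *ᵥ s))⁻¹ • vecMulVec (B *ᵥ s) (s ᵥ* B) := by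
    rw [hBplus]; abel
  refine ⟨?_, by rwa [hEq]⟩
  have hγI : (γ • (1 : Matrix (Fin n) (Fin n) ℝ)).PosDef := by
    have : (γ • (1 : Matrix (Fin n) (Fin n) ℝ)) = diagonal (fun _ => γ) := by
      ext i j
      by_cases h : i = j <;> simp [h, one_apply, diagonal_apply]
    rw [this]
    exact posDef_diagonal_iff.mpr fun i => hγ
  have : Bplus = (B + (s ⬝ᵥ yt)⁻¹ • vecMulVec yt yt
        - (s ⬝ᵥ (B *ᵥ s))⁻¹ • vecMulVec (B *ᵥ s) (s ᵥ* B))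
      + γ • (1 : Matrix (Fin n) (Fin n) ℝ) := hBplus
  rw [this]
  exact key.add hγI
end

section
/- Let B be an n×n real symmetric positive definite matrix, s, ỹ ∈ ℝⁿ with sᵀỹ > 0, and γ ≥ 0, and suppose (ỹᵀỹ)/(sᵀỹ) ≤ C₁ and (sᵀs)/(sᵀỹ) ≤ C₂ for constants C₁, C₂ ≥ 0. Then the inverse H⁺ = (B⁺)⁻¹ of the regularized BFGS update B⁺ = B + (ỹ ỹᵀ)/(sᵀỹ) − (B s sᵀ B)/(sᵀ B s) + γ I satisfies the spectral-norm recursion ‖H⁺‖ ≤ (√(C₁ C₂) + 1)² ‖B⁻¹‖ + C₂. -/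
open Matrix

namespace BFGSAux

variable {n : ℕ}

lemma star_id (x : Fin n → ℝ) : star x = x := by
  funext i; simp

lemma conjT (M : Matrix (Fin n) (Fin n) ℝ) : Mᴴ = Mᵀ := by
  ext i j; simp [conjTranspose_apply]

lemma vecMulVec_transpose' (a b : Fin n → ℝ) : (vecMulVec a b)ᵀ = vecMulVec b a := by
  ext i j; simp [vecMulVec_apply, mul_comm]

lemma mul_vecMulVec (M : Matrix (Fin n) (Fin n) ℝ) (a b : Fin n → ℝ) :
    M * vecMulVec a b = vecMulVec (M *ᵥ a) b := by
  ext i j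
  simp [vecMulVec_apply, Matrix.mul_apply, Matrix.mulVec, dotProduct, Finset.sum_mul,
    mul_assoc]

lemma vecMulVec_mul (a b : Fin n → ℝ) (M : Matrix (Fin n) (Fin n) ℝ) :
    vecMulVec a b * M = vecMulVec a (Mᵀ *ᵥ b) := by
  ext i j
  simp [vecMulVec_apply, Matrix.mul_apply, Matrix.mulVec, dotProduct, Finset.mul_sum,
    mul_assoc, mul_comm, mul_left_comm]

lemma vecMulVec_mul_vecMulVec (a b c d : Fin n → ℝ) :
    vecMulVec a b * vecMulVec c d = (b ⬝ᵥ c) • vecMulVec a d := by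
  ext i j
  simp only [Matrix.mul_apply, vecMulVec_apply, Matrix.smul_apply, dotProduct,
    smul_eq_mul, Finset.sum_mul, Finset.mul_sum]
  exact Finset.sum_congr rfl fun k _ => by ring

lemma vecMulVec_mulVec (a b x : Fin n → ℝ) :
    vecMulVec a b *ᵥ x = (b ⬝ᵥ x) • a := by
  funext i
  simp [Matrix.mulVec, vecMulVec_apply, dotProduct, Finset.sum_mul, Finset.mul_sum,
    mul_assoc, mul_comm, mul_left_comm]

lemma mulVec_dotProduct' (M : Matrix (Fin n) (Fin n) ℝ) (x y : Fin n → ℝ) :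
    (M *ᵥ x) ⬝ᵥ y = x ⬝ᵥ (Mᵀ *ᵥ y) := by
  simp only [dotProduct, Matrix.mulVec, Matrix.transpose_apply, Finset.sum_mul,
    Finset.mul_sum]
  rw [Finset.sum_comm]
  exact Finset.sum_congr rfl fun i _ => Finset.sum_congr rfl fun j _ => by ring


lemma dp_self_nonneg (x : Fin n → ℝ) : 0 ≤ x ⬝ᵥ x :=
  Finset.sum_nonneg fun i _ => mul_self_nonneg _

/-- Cauchy–Schwarz for a positive semidefinite real matrix. -/
lemma psd_cauchy {M : Matrix (Fin n) (Fin n) ℝ} (hM : M.PosSemidef) (x y : Fin n → ℝ) :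
    (x ⬝ᵥ (M *ᵥ y)) ^ 2 ≤ (x ⬝ᵥ (M *ᵥ x)) * (y ⬝ᵥ (M *ᵥ y)) := by
  have hsymm : Mᵀ = M := by rw [← conjT]; exact hM.1
  have hyx : y ⬝ᵥ (M *ᵥ x) = x ⬝ᵥ (M *ᵥ y) := by
    rw [dotProduct_comm, mulVec_dotProduct' M x y, hsymm]
  have key : ∀ t : ℝ, 0 ≤ (y ⬝ᵥ (M *ᵥ y)) * (t * t) + (2 * (x ⬝ᵥ (M *ᵥ y))) * t
      + (x ⬝ᵥ (M *ᵥ x)) := by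
    intro t
    have h0 := hM.dotProduct_mulVec_nonneg (x + t • y)
    rw [star_id] at h0
    have hexp : (x + t • y) ⬝ᵥ (M *ᵥ (x + t • y)) = (y ⬝ᵥ (M *ᵥ y)) * (t * t)
        + (2 * (x ⬝ᵥ (M *ᵥ y))) * t + (x ⬝ᵥ (M *ᵥ x)) := by
      simp only [Matrix.mulVec_add, Matrix.mulVec_smul, add_dotProduct,
        dotProduct_add, smul_dotProduct, dotProduct_smul, smul_eq_mul]
      rw [hyx]; ring
    linarith [hexp ▸ h0]
  have hd := discrim_le_zero key
  rw [discrim] at hd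
  nlinarith [hd]

/-- Quadratic form bounded by the spectral norm. -/
lemma inner_equiv_symm' (x y : Fin n → ℝ) :
    inner ℝ ((WithLp.equiv 2 (Fin n → ℝ)).symm x : EuclideanSpace ℝ (Fin n))
      ((WithLp.equiv 2 (Fin n → ℝ)).symm y) = star x ⬝ᵥ y := by
  rw [dotProduct_comm]; rfl

lemma quad_le_specNorm (M : Matrix (Fin n) (Fin n) ℝ) (x : Fin n → ℝ) :
    x ⬝ᵥ (M *ᵥ x) ≤ ‖Matrix.toEuclideanCLM (𝕜 := ℝ) M‖ * (x ⬝ᵥ x) := by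
  set T := Matrix.toEuclideanCLM (𝕜 := ℝ) M with hT
  set x' : EuclideanSpace ℝ (Fin n) := (WithLp.equiv 2 _).symm x with hx'
  have h1 : x ⬝ᵥ (M *ᵥ x) = inner ℝ x' (T x') := by
    rw [show T x' = (WithLp.equiv 2 _).symm (M *ᵥ x) from rfl,
      inner_equiv_symm', star_id]
  have h2 : x ⬝ᵥ x = ‖x'‖ ^ 2 := by
    rw [← real_inner_self_eq_norm_sq, inner_equiv_symm', star_id]
  rw [h1, h2]
  calc inner ℝ x' (T x') ≤ ‖x'‖ * ‖T x'‖ := real_inner_le_norm _ _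
    _ ≤ ‖x'‖ * (‖T‖ * ‖x'‖) := by
        gcongr; exact ContinuousLinearMap.le_opNorm _ _
    _ = ‖T‖ * ‖x'‖ ^ 2 := by ring

/-- The spectral norm of a PSD matrix is bounded by any quadratic-form bound. -/
lemma specNorm_le_of_quadratic {M : Matrix (Fin n) (Fin n) ℝ} (hM : M.PosSemidef) {c : ℝ}
    (hc : 0 ≤ c) (h : ∀ x, x ⬝ᵥ (M *ᵥ x) ≤ c * (x ⬝ᵥ x)) :
    ‖Matrix.toEuclideanCLM (𝕜 := ℝ) M‖ ≤ c := by
  have hsymm : Mᵀ = M := by rw [← conjT]; exact hM.1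
  refine ContinuousLinearMap.opNorm_le_bound _ hc fun x' => ?_
  set v : Fin n → ℝ := WithLp.equiv 2 _ x' with hv
  set u := M *ᵥ v with hu
  have hTx : Matrix.toEuclideanCLM (𝕜 := ℝ) M x' = (WithLp.equiv 2 _).symm u := rfl
  have huu : 0 ≤ u ⬝ᵥ u := dp_self_nonneg u
  have hvv : 0 ≤ v ⬝ᵥ v := dp_self_nonneg v
  -- (u ⬝ᵥ u)^2 ≤ c^2 * (v⬝ᵥv) * (u⬝ᵥu)
  have hcs := psd_cauchy hM v u
  have hvu : v ⬝ᵥ (M *ᵥ u) = u ⬝ᵥ u := by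
    rw [← hsymm, ← mulVec_dotProduct', ← hu]
  have hkey : u ⬝ᵥ u ≤ c ^ 2 * (v ⬝ᵥ v) := by
    rcases eq_or_lt_of_le huu with h0 | h0
    · nlinarith
    · have h1 : (u ⬝ᵥ u) ^ 2 ≤ (c * (v ⬝ᵥ v)) * (c * (u ⬝ᵥ u)) := by
        calc (u ⬝ᵥ u) ^ 2 = (v ⬝ᵥ (M *ᵥ u)) ^ 2 := by rw [hvu]
          _ ≤ (v ⬝ᵥ (M *ᵥ v)) * (u ⬝ᵥ (M *ᵥ u)) := hcs
          _ ≤ (c * (v ⬝ᵥ v)) * (c * (u ⬝ᵥ u)) := by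
              have h2 := hM.dotProduct_mulVec_nonneg u
              rw [star_id] at h2
              exact mul_le_mul (h v) (h u) h2 (by positivity)
      nlinarith
  -- now convert to norms
  have hnTx : ‖Matrix.toEuclideanCLM (𝕜 := ℝ) M x'‖ ^ 2 = u ⬝ᵥ u := by
    rw [hTx, ← real_inner_self_eq_norm_sq, inner_equiv_symm', star_id]
  have hnx : ‖x'‖ ^ 2 = v ⬝ᵥ v := by
    have : x' = (WithLp.equiv 2 _).symm v := rfl
    rw [this, ← real_inner_self_eq_norm_sq, inner_equiv_symm', star_id]
  have hfin : ‖Matrix.toEuclideanCLM (𝕜 := ℝ) M x'‖ ^ 2 ≤ (c * ‖x'‖) ^ 2 := by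
    rw [hnTx]; calc u ⬝ᵥ u ≤ c ^ 2 * (v ⬝ᵥ v) := hkey
      _ = (c * ‖x'‖)^2 := by rw [← hnx]; ring
  have hs := Real.sqrt_le_sqrt hfin
  rwa [Real.sqrt_sq (norm_nonneg _), Real.sqrt_sq (by positivity)] at hs



lemma psd_vecMulVec_self (v : Fin n → ℝ) : (vecMulVec v v).PosSemidef := by
  refine PosSemidef.of_dotProduct_mulVec_nonneg ?_ ?_
  · show _ᴴ = _
    rw [conjT, vecMulVec_transpose']
  · intro x
    rw [star_id, BFGSAux.vecMulVec_mulVec, dotProduct_smul, smul_eq_mul, dotProduct_comm]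
    exact mul_self_nonneg _

lemma psd_smul {M : Matrix (Fin n) (Fin n) ℝ} {c : ℝ} (hc : 0 ≤ c) (hM : M.PosSemidef) :
    (c • M).PosSemidef := by
  refine PosSemidef.of_dotProduct_mulVec_nonneg ?_ ?_
  · show _ᴴ = _
    rw [conjT, Matrix.transpose_smul, ← conjT, hM.1.eq]
  · intro x
    rw [Matrix.smul_mulVec, dotProduct_smul, smul_eq_mul]
    exact mul_nonneg hc (hM.dotProduct_mulVec_nonneg x)

lemma dotProduct_mulVec'' (M : Matrix (Fin n) (Fin n) ℝ) (x y : Fin n → ℝ) :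
    x ⬝ᵥ (M *ᵥ y) = (Mᵀ *ᵥ x) ⬝ᵥ y := by
  rw [mulVec_dotProduct', Matrix.transpose_transpose]

end BFGSAux

open BFGSAux

/-- The spectral norm (operator 2-norm) of a real square matrix. -/
noncomputable def specNorm {n : ℕ} (A : Matrix (Fin n) (Fin n) ℝ) : ℝ :=
  ‖Matrix.toEuclideanCLM (𝕜 := ℝ) A‖

set_option maxHeartbeats 1000000 in
/-- If `(ỹᵀỹ)/(sᵀỹ) ≤ C₁` and `(sᵀs)/(sᵀỹ) ≤ C₂`, then the inverse
`H⁺ = (B⁺)⁻¹` of the regularized BFGS update satisfies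
`‖H⁺‖ ≤ (√(C₁ C₂) + 1)² ‖B⁻¹‖ + C₂`. -/
theorem regularized_bfgs_inverse_norm_recursion {n : ℕ} (B : Matrix (Fin n) (Fin n) ℝ)
    (hB : B.PosDef) (s yt : Fin n → ℝ) (hsy : 0 < s ⬝ᵥ yt) (γ : ℝ) (hγ : 0 ≤ γ)
    (C₁ C₂ : ℝ) (hC₁ : 0 ≤ C₁) (hC₂ : 0 ≤ C₂)
    (hyy : (yt ⬝ᵥ yt) / (s ⬝ᵥ yt) ≤ C₁) (hss : (s ⬝ᵥ s) / (s ⬝ᵥ yt) ≤ C₂)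
    (Bplus : Matrix (Fin n) (Fin n) ℝ)
    (hBplus : Bplus = B + (s ⬝ᵥ yt)⁻¹ • vecMulVec yt yt
        - (s ⬝ᵥ (B *ᵥ s))⁻¹ • vecMulVec (B *ᵥ s) (s ᵥ* B)
        + γ • (1 : Matrix (Fin n) (Fin n) ℝ)) :
    specNorm Bplus⁻¹ ≤ (Real.sqrt (C₁ * C₂) + 1) ^ 2 * specNorm B⁻¹ + C₂ := by
  classical
  have hsne : s ≠ 0 := by rintro rfl; simp at hsy
  have ha0 : (s ⬝ᵥ yt) ≠ 0 := ne_of_gt hsy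
  have hρ0 : (0:ℝ) ≤ (s ⬝ᵥ yt)⁻¹ := inv_nonneg.mpr hsy.le
  have hBdet : IsUnit B.det := isUnit_iff_ne_zero.mpr hB.det_pos.ne'
  have hBB : B * B⁻¹ = 1 := Matrix.mul_nonsing_inv B hBdet
  have hBB' : B⁻¹ * B = 1 := Matrix.nonsing_inv_mul B hBdet
  have hBsymm : Bᵀ = B := by rw [← conjT]; exact hB.1
  have hHsymm : (B⁻¹)ᵀ = B⁻¹ := by rw [← conjT]; exact hB.inv.1
  have hb0 : 0 < s ⬝ᵥ (B *ᵥ s) := by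
    have := hB.dotProduct_mulVec_pos hsne; rwa [star_id] at this
  have hb0' : (s ⬝ᵥ (B *ᵥ s)) ≠ 0 := ne_of_gt hb0
  rw [← Matrix.mulVec_transpose, hBsymm] at hBplus
  set Bs := B *ᵥ s with hBs
  set Hy := B⁻¹ *ᵥ yt with hHy
  set t := yt ⬝ᵥ Hy with ht
  set M := B + (s ⬝ᵥ yt)⁻¹ • vecMulVec yt yt - (s ⬝ᵥ Bs)⁻¹ • vecMulVec Bs Bs with hMdef
  set Hp := B⁻¹ - (s ⬝ᵥ yt)⁻¹ • vecMulVec s Hy - (s ⬝ᵥ yt)⁻¹ • vecMulVec Hy s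
      + (((s ⬝ᵥ yt)⁻¹)^2 * t + (s ⬝ᵥ yt)⁻¹) • vecMulVec s s with hHpdef
  -- factorization of Hp
  have hfact : Hp = (1 - (s ⬝ᵥ yt)⁻¹ • vecMulVec s yt) * B⁻¹
      * (1 - (s ⬝ᵥ yt)⁻¹ • vecMulVec s yt)ᵀ + (s ⬝ᵥ yt)⁻¹ • vecMulVec s s := by
    rw [Matrix.transpose_sub, Matrix.transpose_one, Matrix.transpose_smul, vecMulVec_transpose']
    simp only [Matrix.sub_mul, Matrix.mul_sub, Matrix.one_mul, Matrix.mul_one, Matrix.smul_mul,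
      Matrix.mul_smul, smul_smul]
    rw [BFGSAux.vecMulVec_mul s yt B⁻¹, hHsymm, ← hHy, BFGSAux.mul_vecMulVec B⁻¹ yt s, ← hHy,
      BFGSAux.vecMulVec_mul_vecMulVec s Hy yt s,
      show Hy ⬝ᵥ yt = t by rw [ht, dotProduct_comm]]
    rw [hHpdef]
    module
  have hHpPSD : Hp.PosSemidef := by
    rw [hfact]
    refine Matrix.PosSemidef.add ?_ (psd_smul hρ0 (psd_vecMulVec_self s))
    have h := (hB.inv.posSemidef).mul_mul_conjTranspose_same (1 - (s ⬝ᵥ yt)⁻¹ • vecMulVec s yt)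
    rwa [conjT] at h
  -- the key algebraic identity
  have hMHp : M * Hp = 1 := by
    have e1 : B * vecMulVec s Hy = vecMulVec Bs Hy := by rw [BFGSAux.mul_vecMulVec, ← hBs]
    have e2 : B * vecMulVec Hy s = vecMulVec yt s := by
      rw [BFGSAux.mul_vecMulVec, hHy, Matrix.mulVec_mulVec, hBB, Matrix.one_mulVec]
    have e3 : B * vecMulVec s s = vecMulVec Bs s := by rw [BFGSAux.mul_vecMulVec, ← hBs]
    have e4 : vecMulVec yt yt * B⁻¹ = vecMulVec yt Hy := by
      rw [BFGSAux.vecMulVec_mul, hHsymm, ← hHy]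
    have e5 : vecMulVec yt yt * vecMulVec s Hy = (s ⬝ᵥ yt) • vecMulVec yt Hy := by
      rw [BFGSAux.vecMulVec_mul_vecMulVec, dotProduct_comm]
    have e6 : vecMulVec yt yt * vecMulVec Hy s = t • vecMulVec yt s := by
      rw [BFGSAux.vecMulVec_mul_vecMulVec, ← ht]
    have e7 : vecMulVec yt yt * vecMulVec s s = (s ⬝ᵥ yt) • vecMulVec yt s := by
      rw [BFGSAux.vecMulVec_mul_vecMulVec, dotProduct_comm]
    have e8 : vecMulVec Bs Bs * B⁻¹ = vecMulVec Bs s := by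
      rw [BFGSAux.vecMulVec_mul, hHsymm, hBs, Matrix.mulVec_mulVec, hBB', Matrix.one_mulVec]
    have e9 : vecMulVec Bs Bs * vecMulVec s Hy = (s ⬝ᵥ Bs) • vecMulVec Bs Hy := by
      rw [BFGSAux.vecMulVec_mul_vecMulVec, dotProduct_comm]
    have e10 : vecMulVec Bs Bs * vecMulVec Hy s = (s ⬝ᵥ yt) • vecMulVec Bs s := by
      rw [BFGSAux.vecMulVec_mul_vecMulVec, hBs, mulVec_dotProduct', hBsymm, hHy,
        Matrix.mulVec_mulVec, hBB, Matrix.one_mulVec]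
    have e11 : vecMulVec Bs Bs * vecMulVec s s = (s ⬝ᵥ Bs) • vecMulVec Bs s := by
      rw [BFGSAux.vecMulVec_mul_vecMulVec, dotProduct_comm]
    rw [hMdef, hHpdef]
    simp only [Matrix.add_mul, Matrix.sub_mul, Matrix.mul_add, Matrix.mul_sub, Matrix.smul_mul,
      Matrix.mul_smul, smul_smul, hBB, e1, e2, e3, e4, e5, e6, e7, e8, e9, e10, e11]
    match_scalars <;> field_simp <;> ring
  -- Hp is positive definite
  have hHpPD : Hp.PosDef := by
    refine PosDef.of_dotProduct_mulVec_pos hHpPSD.1 fun x hx => ?_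
    rcases (hHpPSD.dotProduct_mulVec_nonneg x).eq_or_lt with h0 | h0
    · exfalso
      have hz : Hp *ᵥ x = 0 := (hHpPSD.dotProduct_mulVec_zero_iff x).mp h0.symm
      have : x = 0 := by
        have : (M * Hp) *ᵥ x = x := by rw [hMHp, Matrix.one_mulVec]
        rw [← Matrix.mulVec_mulVec, hz, Matrix.mulVec_zero] at this
        exact this.symm
      exact hx this
    · exact h0
  have hHpInvM : Hp⁻¹ = M := Matrix.inv_eq_left_inv hMHp
  have hMPD : M.PosDef := hHpInvM ▸ hHpPD.inv
  have hBplusM : Bplus = M + γ • 1 := hBplus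
  have hBplusPD : Bplus.PosDef := by
    rw [hBplusM]
    exact hMPD.add_posSemidef (psd_smul hγ Matrix.PosSemidef.one)
  have hBplusdet : IsUnit Bplus.det := isUnit_iff_ne_zero.mpr hBplusPD.det_pos.ne'
  have hBplusmul : Bplus * Bplus⁻¹ = 1 := Matrix.mul_nonsing_inv _ hBplusdet
  have hBpInvPD : Bplus⁻¹.PosDef := hBplusPD.inv
  -- Step A : quadratic form of Bplus⁻¹ is dominated by that of Hp
  have key1 : ∀ x, x ⬝ᵥ (Bplus⁻¹ *ᵥ x) ≤ x ⬝ᵥ (Hp *ᵥ x) := by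
    intro x
    set z := Bplus⁻¹ *ᵥ x with hz
    have hq0 : 0 ≤ x ⬝ᵥ z := by
      have h := hBpInvPD.posSemidef.dotProduct_mulVec_nonneg x; rwa [star_id] at h
    have hR0 : 0 ≤ x ⬝ᵥ (Hp *ᵥ x) := by
      have h := hHpPSD.dotProduct_mulVec_nonneg x; rwa [star_id] at h
    have hHpM : Hp * M = 1 := mul_eq_one_comm.mp hMHp
    have hw : Hp *ᵥ (M *ᵥ z) = z := by
      rw [Matrix.mulVec_mulVec, hHpM, Matrix.one_mulVec]
    have hcs := psd_cauchy hHpPSD x (M *ᵥ z)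
    rw [hw] at hcs
    have hBz : Bplus *ᵥ z = x := by
      rw [hz, Matrix.mulVec_mulVec, hBplusmul, Matrix.one_mulVec]
    have hxz : M *ᵥ z + γ • z = x := by
      rw [← hBz, hBplusM, Matrix.add_mulVec, Matrix.smul_mulVec, Matrix.one_mulVec]
    have h2 : (M *ᵥ z) ⬝ᵥ z ≤ x ⬝ᵥ z := by
      have hexp : x ⬝ᵥ z = (M *ᵥ z) ⬝ᵥ z + γ * (z ⬝ᵥ z) := by
        rw [← hxz, add_dotProduct, smul_dotProduct, smul_eq_mul]
      have := mul_nonneg hγ (dp_self_nonneg z)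
      linarith
    rcases hq0.eq_or_lt with h0 | h0
    · rw [← h0]; exact hR0
    · nlinarith [mul_le_mul_of_nonneg_left h2 hR0]
  -- Step B : quadratic form of Hp bound
  have hnH : 0 ≤ ‖Matrix.toEuclideanCLM (𝕜 := ℝ) B⁻¹‖ := norm_nonneg _
  set K := Real.sqrt (C₁ * C₂) with hK
  have hK0 : 0 ≤ K := Real.sqrt_nonneg _
  have hK2 : K ^ 2 = C₁ * C₂ := Real.sq_sqrt (mul_nonneg hC₁ hC₂)
  have hρy : (s ⬝ᵥ yt)⁻¹ * (yt ⬝ᵥ yt) ≤ C₁ := by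
    rw [mul_comm, ← div_eq_mul_inv]; exact hyy
  have hρs : (s ⬝ᵥ yt)⁻¹ * (s ⬝ᵥ s) ≤ C₂ := by
    rw [mul_comm, ← div_eq_mul_inv]; exact hss
  have hY0 : 0 ≤ yt ⬝ᵥ yt := dp_self_nonneg yt
  have hS0 : 0 ≤ s ⬝ᵥ s := dp_self_nonneg s
  have key2 : ∀ x, x ⬝ᵥ (Hp *ᵥ x) ≤ ((K + 1) ^ 2 * ‖Matrix.toEuclideanCLM (𝕜 := ℝ) B⁻¹‖ + C₂)
      * (x ⬝ᵥ x) := by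
    intro x
    set p := s ⬝ᵥ x with hp
    set q := yt ⬝ᵥ x with hq
    set w := x - ((s ⬝ᵥ yt)⁻¹ * p) • yt with hwdef
    have hX0 : 0 ≤ x ⬝ᵥ x := dp_self_nonneg x
    have hAtx : (1 - (s ⬝ᵥ yt)⁻¹ • vecMulVec s yt)ᵀ *ᵥ x = w := by
      rw [Matrix.transpose_sub, Matrix.transpose_one, Matrix.transpose_smul,
        vecMulVec_transpose', Matrix.sub_mulVec, Matrix.one_mulVec,
        Matrix.smul_mulVec, BFGSAux.vecMulVec_mulVec, hwdef, smul_smul, ← hp]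
    have hxHp : x ⬝ᵥ (Hp *ᵥ x) = w ⬝ᵥ (B⁻¹ *ᵥ w) + (s ⬝ᵥ yt)⁻¹ * p ^ 2 := by
      rw [hfact, Matrix.add_mulVec, dotProduct_add]
      congr 1
      · rw [← Matrix.mulVec_mulVec, ← Matrix.mulVec_mulVec, dotProduct_mulVec'', hAtx]
      · rw [Matrix.smul_mulVec, BFGSAux.vecMulVec_mulVec, dotProduct_smul, smul_eq_mul,
          dotProduct_smul, smul_eq_mul, dotProduct_comm x s, ← hp]
        ring
    have hCSs : p ^ 2 ≤ (s ⬝ᵥ s) * (x ⬝ᵥ x) := by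
      have h := psd_cauchy (Matrix.PosSemidef.one (n := Fin n)) s x
      simpa [Matrix.one_mulVec] using h
    have hCSy : q ^ 2 ≤ (yt ⬝ᵥ yt) * (x ⬝ᵥ x) := by
      have h := psd_cauchy (Matrix.PosSemidef.one (n := Fin n)) yt x
      simpa [Matrix.one_mulVec] using h
    have hww : w ⬝ᵥ w = x ⬝ᵥ x - 2 * ((s ⬝ᵥ yt)⁻¹ * p) * q
        + ((s ⬝ᵥ yt)⁻¹ * p) ^ 2 * (yt ⬝ᵥ yt) := by
      rw [hwdef, hq, hp]
      simp only [sub_dotProduct, dotProduct_sub, smul_dotProduct,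
        dotProduct_smul, smul_eq_mul]
      rw [dotProduct_comm x yt]
      ring
    -- |ρ p q| ≤ K * (x ⬝ᵥ x)
    have hpq : p ^ 2 * q ^ 2 ≤ ((s ⬝ᵥ s) * (x ⬝ᵥ x)) * ((yt ⬝ᵥ yt) * (x ⬝ᵥ x)) :=
      mul_le_mul hCSs hCSy (sq_nonneg q) (mul_nonneg hS0 hX0)
    have habs : |(s ⬝ᵥ yt)⁻¹ * p * q| ≤ K * (x ⬝ᵥ x) := by
      have hsq : ((s ⬝ᵥ yt)⁻¹ * p * q) ^ 2 ≤ (K * (x ⬝ᵥ x)) ^ 2 := by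
        calc ((s ⬝ᵥ yt)⁻¹ * p * q) ^ 2 = ((s ⬝ᵥ yt)⁻¹)^2 * (p^2 * q^2) := by ring
          _ ≤ ((s ⬝ᵥ yt)⁻¹)^2 * (((s ⬝ᵥ s) * (x ⬝ᵥ x)) * ((yt ⬝ᵥ yt) * (x ⬝ᵥ x))) :=
              mul_le_mul_of_nonneg_left hpq (sq_nonneg _)
          _ = ((s ⬝ᵥ yt)⁻¹ * (s ⬝ᵥ s)) * ((s ⬝ᵥ yt)⁻¹ * (yt ⬝ᵥ yt)) * (x ⬝ᵥ x)^2 := by ring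
          _ ≤ C₂ * C₁ * (x ⬝ᵥ x)^2 :=
              mul_le_mul_of_nonneg_right
                (mul_le_mul hρs hρy (mul_nonneg hρ0 hY0) hC₂) (sq_nonneg _)
          _ = (K * (x ⬝ᵥ x))^2 := by rw [mul_pow, hK2]; ring
      have h5 := Real.sqrt_le_sqrt hsq
      rwa [Real.sqrt_sq_eq_abs, Real.sqrt_sq (mul_nonneg hK0 hX0)] at h5
    have hm : -(2 * ((s ⬝ᵥ yt)⁻¹ * p) * q) ≤ 2 * (K * (x ⬝ᵥ x)) := by
      have h6 := neg_abs_le ((s ⬝ᵥ yt)⁻¹ * p * q)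
      nlinarith [habs, h6]
    have ht3 : ((s ⬝ᵥ yt)⁻¹ * p)^2 * (yt ⬝ᵥ yt) ≤ C₂ * C₁ * (x ⬝ᵥ x) := by
      calc ((s ⬝ᵥ yt)⁻¹ * p)^2 * (yt ⬝ᵥ yt) = ((s ⬝ᵥ yt)⁻¹)^2 * p^2 * (yt ⬝ᵥ yt) := by ring
        _ ≤ ((s ⬝ᵥ yt)⁻¹)^2 * ((s ⬝ᵥ s) * (x ⬝ᵥ x)) * (yt ⬝ᵥ yt) :=
            mul_le_mul_of_nonneg_right (mul_le_mul_of_nonneg_left hCSs (sq_nonneg _)) hY0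
        _ = ((s ⬝ᵥ yt)⁻¹ * (s ⬝ᵥ s)) * ((s ⬝ᵥ yt)⁻¹ * (yt ⬝ᵥ yt)) * (x ⬝ᵥ x) := by ring
        _ ≤ C₂ * C₁ * (x ⬝ᵥ x) :=
            mul_le_mul_of_nonneg_right (mul_le_mul hρs hρy (mul_nonneg hρ0 hY0) hC₂) hX0
    have hKX : K^2 * (x ⬝ᵥ x) = C₁ * C₂ * (x ⬝ᵥ x) := by rw [hK2]
    have hwwle : w ⬝ᵥ w ≤ (K + 1)^2 * (x ⬝ᵥ x) := by
      rw [hww]; nlinarith [hm, ht3, hKX, hX0, hK0]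
    have hwHw : w ⬝ᵥ (B⁻¹ *ᵥ w) ≤ ‖Matrix.toEuclideanCLM (𝕜 := ℝ) B⁻¹‖ * (w ⬝ᵥ w) :=
      quad_le_specNorm _ w
    have hρp2 : (s ⬝ᵥ yt)⁻¹ * p^2 ≤ C₂ * (x ⬝ᵥ x) := by
      calc (s ⬝ᵥ yt)⁻¹ * p^2 ≤ (s ⬝ᵥ yt)⁻¹ * ((s ⬝ᵥ s) * (x ⬝ᵥ x)) :=
            mul_le_mul_of_nonneg_left hCSs hρ0
        _ = ((s ⬝ᵥ yt)⁻¹ * (s ⬝ᵥ s)) * (x ⬝ᵥ x) := by ring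
        _ ≤ C₂ * (x ⬝ᵥ x) := mul_le_mul_of_nonneg_right hρs hX0
    rw [hxHp]
    have hfin := mul_le_mul_of_nonneg_left hwwle hnH
    linarith [hwHw, hfin, hρp2]
  simp only [specNorm]
  refine specNorm_le_of_quadratic hBpInvPD.posSemidef
    (add_nonneg (mul_nonneg (sq_nonneg _) hnH) hC₂) (fun x => (key1 x).trans (key2 x))
end
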